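/- arXiv:1809.00828 — 2 statements merged into one kernel-verified Lean document; each statement's English description precedes it below -/
import Mathlib

section
/- Additive-Schwarz lemma: Let A be an n×n real symmetric positive definite matrix, 𝓑 a finite collection of index sets covering {1,...,n}, A_B = R_B A R_Bᵀ, and S = Σ_{B∈𝓑} R_Bᵀ A_B⁻¹ R_B. Then for every vector v ∈ ℝⁿ, vᵀ S⁻¹ v = min { Σ_{B∈𝓑} v_Bᵀ A_B v_B : (v_B)_{B∈𝓑} with Σ_{B∈𝓑} R_Bᵀ v_B = v }. -/
/-!
Put `u = S⁻¹ v` and `w⁰_B = A_B⁻¹ R_B u`. Then `Σ_B R_Bᵀ w⁰_B = S u = v`, and for every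
decomposition `v = Σ_B R_Bᵀ w_B` one has `Σ_B w_Bᵀ A_B w⁰_B = Σ_B w_Bᵀ R_B u = vᵀ u`.
Taking `w = w⁰` gives `Σ_B w⁰_Bᵀ A_B w⁰_B = vᵀ u`; for general `w` the blockwise bound
`wᵀ M w ≥ 2 wᵀ M w⁰ - w⁰ᵀ M w⁰` (expand `(w - w⁰)ᵀ M (w - w⁰) ≥ 0`) sums to
`Σ_B w_Bᵀ A_B w_B ≥ 2 vᵀ u - vᵀ u`.
-/

open scoped Matrix

/-- The restriction matrix `R_B` whose rows are the standard basis vectors indexed by `B`. -/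
def restr {n : ℕ} (B : Finset (Fin n)) : Matrix {i // i ∈ B} (Fin n) ℝ :=
  Matrix.of fun b j => if (b : Fin n) = j then 1 else 0

namespace Matrix

variable {m ι : Type*} [Fintype m]

lemma PosSemidef.two_mul_dotProduct_mulVec_sub_le {M : Matrix m m ℝ} (hM : M.PosSemidef)
    (x y : m → ℝ) : 2 * (x ⬝ᵥ (M *ᵥ y)) - y ⬝ᵥ (M *ᵥ y) ≤ x ⬝ᵥ (M *ᵥ x) := by
  have hsymm : y ⬝ᵥ (M *ᵥ x) = x ⬝ᵥ (M *ᵥ y) := by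
    conv_lhs => rw [← hM.isHermitian.eq, conjTranspose_eq_transpose_of_trivial]
    rw [dotProduct_mulVec, vecMul_transpose, dotProduct_comm]
  have hnonneg := hM.dotProduct_mulVec_nonneg (x - y)
  simp only [star_trivial, mulVec_sub, dotProduct_sub, sub_dotProduct] at hnonneg
  linarith

lemma dotProduct_transpose_mul_mul_mulVec {k : Type*} [Fintype k] (R : Matrix k m ℝ)
    (M : Matrix k k ℝ) (x : m → ℝ) :
    x ⬝ᵥ ((Rᵀ * M * R) *ᵥ x) = (R *ᵥ x) ⬝ᵥ (M *ᵥ (R *ᵥ x)) := by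
  rw [← mulVec_mulVec, ← mulVec_mulVec, dotProduct_mulVec, vecMul_transpose]

variable {κ : ι → Type*} [∀ i, Fintype (κ i)]

lemma posDef_sum_transpose_mul_mul {s : Finset ι} {R : (i : ι) → Matrix (κ i) m ℝ}
    {M : (i : ι) → Matrix (κ i) (κ i) ℝ} (hM : ∀ i ∈ s, (M i).PosDef)
    (hR : ∀ x ≠ 0, ∃ i ∈ s, R i *ᵥ x ≠ 0) :
    (∑ i ∈ s, (R i)ᵀ * M i * R i).PosDef := by
  have hpsd : ∀ i ∈ s, ((R i)ᵀ * M i * R i).PosSemidef := fun i hi => by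
    simpa only [conjTranspose_eq_transpose_of_trivial] using
      (hM i hi).posSemidef.conjTranspose_mul_mul_same (R i)
  refine PosDef.of_dotProduct_mulVec_pos (posSemidef_sum s hpsd).isHermitian fun x hx => ?_
  obtain ⟨i, hi, hRx⟩ := hR x hx
  rw [star_trivial, sum_mulVec, dotProduct_sum]
  refine Finset.sum_pos' (fun j hj => ?_) ⟨i, hi, ?_⟩
  · simpa only [star_trivial] using (hpsd j hj).dotProduct_mulVec_nonneg x
  · rw [dotProduct_transpose_mul_mul_mulVec]
    simpa only [star_trivial] using (hM i hi).dotProduct_mulVec_pos hRx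

theorem isLeast_additiveSchwarz [DecidableEq m] [∀ i, DecidableEq (κ i)] {s : Finset ι}
    {R : (i : ι) → Matrix (κ i) m ℝ} {M : (i : ι) → Matrix (κ i) (κ i) ℝ}
    (hM : ∀ i ∈ s, (M i).PosDef) (hS : IsUnit (∑ i ∈ s, (R i)ᵀ * (M i)⁻¹ * R i)) (v : m → ℝ) :
    IsLeast {r : ℝ | ∃ w : (i : ι) → κ i → ℝ,
        (∑ i ∈ s, (R i)ᵀ *ᵥ w i) = v ∧ r = ∑ i ∈ s, w i ⬝ᵥ (M i *ᵥ w i)}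
      (v ⬝ᵥ ((∑ i ∈ s, (R i)ᵀ * (M i)⁻¹ * R i)⁻¹ *ᵥ v)) := by
  set S := ∑ i ∈ s, (R i)ᵀ * (M i)⁻¹ * R i with hS_def
  set u := S⁻¹ *ᵥ v
  have hSu : S *ᵥ u = v := by
    rw [mulVec_mulVec, mul_nonsing_inv _ ((isUnit_iff_isUnit_det S).mp hS), one_mulVec]
  set w₀ : (i : ι) → κ i → ℝ := fun i => (M i)⁻¹ *ᵥ (R i *ᵥ u)
  have hMw₀ : ∀ i ∈ s, M i *ᵥ w₀ i = R i *ᵥ u := fun i hi => by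
    rw [mulVec_mulVec, mul_nonsing_inv _ ((hM i hi).isUnit.map detMonoidHom), one_mulVec]
  have hw₀ : ∑ i ∈ s, (R i)ᵀ *ᵥ w₀ i = v := by
    simp only [w₀, mulVec_mulVec, ← Matrix.mul_assoc, ← sum_mulVec, ← hS_def, hSu]
  have hpair : ∀ w : (i : ι) → κ i → ℝ, ∑ i ∈ s, (R i)ᵀ *ᵥ w i = v →
      v ⬝ᵥ u = ∑ i ∈ s, w i ⬝ᵥ (M i *ᵥ w₀ i) := fun w hw => by
    rw [← hw, sum_dotProduct]
    refine Finset.sum_congr rfl fun i hi => ?_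
    rw [hMw₀ i hi, dotProduct_comm, dotProduct_mulVec, vecMul_transpose, dotProduct_comm]
  refine ⟨⟨w₀, hw₀, hpair w₀ hw₀⟩, ?_⟩
  rintro r ⟨w, hw, rfl⟩
  calc v ⬝ᵥ u = ∑ i ∈ s, (2 * (w i ⬝ᵥ (M i *ᵥ w₀ i)) - w₀ i ⬝ᵥ (M i *ᵥ w₀ i)) := by
        rw [Finset.sum_sub_distrib, ← Finset.mul_sum, ← hpair w hw, ← hpair w₀ hw₀]; ring
    _ ≤ ∑ i ∈ s, w i ⬝ᵥ (M i *ᵥ w i) := Finset.sum_le_sum fun i hi =>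
        (hM i hi).posSemidef.two_mul_dotProduct_mulVec_sub_le _ _

end Matrix

section restr

variable {n : ℕ}

lemma restr_mulVec_apply (B : Finset (Fin n)) (x : Fin n → ℝ) (b : {i // i ∈ B}) :
    (restr B *ᵥ x) b = x b := by
  simp [restr, Matrix.mulVec, dotProduct]

lemma restr_mul_transpose (B : Finset (Fin n)) : restr B * (restr B)ᵀ = 1 := by
  ext a b
  simp only [restr, Matrix.mul_apply, Matrix.transpose_apply, Matrix.of_apply, mul_ite, mul_one,
    mul_zero, Finset.sum_ite_eq, Finset.mem_univ, if_true, Matrix.one_apply, Subtype.ext_iff]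

lemma Matrix.PosDef.restr_mul_mul_transpose {A : Matrix (Fin n) (Fin n) ℝ} (hA : A.PosDef)
    (B : Finset (Fin n)) : (restr B * A * (restr B)ᵀ).PosDef := by
  have hinj : Function.Injective (restr B).vecMul := fun x y hxy => by
    simpa [Matrix.vecMul_vecMul, restr_mul_transpose] using congrArg (· ᵥ* (restr B)ᵀ) hxy
  simpa only [Matrix.conjTranspose_eq_transpose_of_trivial] using
    hA.mul_mul_conjTranspose_same hinj

lemma exists_restr_mulVec_ne_zero {𝓑 : Finset (Finset (Fin n))}
    (hcov : ∀ i : Fin n, ∃ B ∈ 𝓑, i ∈ B) {x : Fin n → ℝ} (hx : x ≠ 0) :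
    ∃ B ∈ 𝓑, restr B *ᵥ x ≠ 0 := by
  obtain ⟨i, hi⟩ := Function.ne_iff.mp hx
  obtain ⟨B, hB, hiB⟩ := hcov i
  exact ⟨B, hB, fun h => hi <| by simpa [restr_mulVec_apply] using congrFun h ⟨i, hiB⟩⟩

end restr

/-- Additive-Schwarz lemma: `vᵀ S⁻¹ v` is the minimum of `Σ_B v_Bᵀ A_B v_B` over all
decompositions `v = Σ_B R_Bᵀ v_B`. -/
theorem stmt_4 {n : ℕ} (A : Matrix (Fin n) (Fin n) ℝ) (hA : A.PosDef)
    (𝓑 : Finset (Finset (Fin n))) (hcov : ∀ i : Fin n, ∃ B ∈ 𝓑, i ∈ B)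
    (v : Fin n → ℝ) :
    IsLeast {r : ℝ | ∃ w : (B : Finset (Fin n)) → ({i // i ∈ B} → ℝ),
        (∑ B ∈ 𝓑, (restr B)ᵀ *ᵥ w B) = v ∧
        r = ∑ B ∈ 𝓑, w B ⬝ᵥ ((restr B * A * (restr B)ᵀ) *ᵥ w B)}
      (v ⬝ᵥ ((∑ B ∈ 𝓑, (restr B)ᵀ * (restr B * A * (restr B)ᵀ)⁻¹ * restr B)⁻¹ *ᵥ v)) := by
  have hAB : ∀ B ∈ 𝓑, (restr B * A * (restr B)ᵀ).PosDef := fun B _ => hA.restr_mul_mul_transpose B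
  have hS : (∑ B ∈ 𝓑, (restr B)ᵀ * (restr B * A * (restr B)ᵀ)⁻¹ * restr B).PosDef :=
    Matrix.posDef_sum_transpose_mul_mul (fun B hB => (hAB B hB).inv)
      fun _ hx => exists_restr_mulVec_ne_zero hcov hx
  exact Matrix.isLeast_additiveSchwarz hAB hS.isUnit v
end

section
/- Let A be SPD and S the Additive-Schwarz matrix for blocks 𝓑 covering {1,...,n}. For any vector v admitting a decomposition v = Σ_{B∈𝓑} R_Bᵀ v_B, one has vᵀ S⁻¹ v ≤ Σ_{B∈𝓑} v_Bᵀ A_B v_B (the easy inequality direction of the Additive-Schwarz lemma). -/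
/-!
Write `S = Σ_B R_Bᵀ A_B⁻¹ R_B` and `u = S⁻¹ v`. Then `vᵀ S⁻¹ v = uᵀ v = Σ_B (R_B u)ᵀ v_B`, and
for SPD `M` one has `2 xᵀ y ≤ xᵀ M⁻¹ x + yᵀ M y`. Applied blockwise, this bounds `2 uᵀ v` by
`Σ_B (R_B u)ᵀ A_B⁻¹ (R_B u) + Σ_B v_Bᵀ A_B v_B = uᵀ S u + Σ_B v_Bᵀ A_B v_B`, and `uᵀ S u = uᵀ v`.
-/

open scoped Matrix

namespace Matrix

theorem PosDef.two_mul_dotProduct_le {m : Type*} [Fintype m] [DecidableEq m]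
    {M : Matrix m m ℝ} (hM : M.PosDef) (x y : m → ℝ) :
    2 * (x ⬝ᵥ y) ≤ x ⬝ᵥ (M⁻¹ *ᵥ x) + y ⬝ᵥ (M *ᵥ y) := by
  have hMinv : M * M⁻¹ = 1 := M.mul_nonsing_inv ((isUnit_iff_isUnit_det M).mp hM.isUnit)
  have hsymm : ∀ z, z ᵥ* M = M *ᵥ z := fun z => by
    rw [← mulVec_transpose, ← conjTranspose_eq_transpose_of_trivial, hM.isHermitian.eq]
  -- expand `0 ≤ zᵀ M z` at `z = y - M⁻¹ x`
  have h := hM.posSemidef.dotProduct_mulVec_nonneg (y - M⁻¹ *ᵥ x)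
  simp only [star_trivial, mulVec_sub, mulVec_mulVec, hMinv, one_mulVec, dotProduct_sub,
    sub_dotProduct, dotProduct_mulVec _ M, hsymm, dotProduct_comm (M⁻¹ *ᵥ x)] at h
  rw [dotProduct_comm (M *ᵥ y), dotProduct_comm y x] at h
  linarith

variable {ι κ : Type*} [Fintype ι] {m : κ → Type*} [∀ k, Fintype (m k)] [∀ k, DecidableEq (m k)]
  (s : Finset κ) (R : ∀ k, Matrix (m k) ι ℝ) (M : ∀ k, Matrix (m k) (m k) ℝ) (w : ∀ k, m k → ℝ)

theorem two_mul_dotProduct_sub_le_sum (hM : ∀ k ∈ s, (M k).PosDef) (u : ι → ℝ) :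
    2 * (u ⬝ᵥ ∑ k ∈ s, (R k)ᵀ *ᵥ w k) - u ⬝ᵥ ((∑ k ∈ s, (R k)ᵀ * (M k)⁻¹ * R k) *ᵥ u) ≤
      ∑ k ∈ s, w k ⬝ᵥ (M k *ᵥ w k) := by
  have hcross : ∀ k, u ⬝ᵥ ((R k)ᵀ *ᵥ w k) = (R k *ᵥ u) ⬝ᵥ w k := fun k => by
    rw [dotProduct_mulVec, vecMul_transpose]
  have hquad : ∀ k, u ⬝ᵥ (((R k)ᵀ * (M k)⁻¹ * R k) *ᵥ u) =
      (R k *ᵥ u) ⬝ᵥ ((M k)⁻¹ *ᵥ (R k *ᵥ u)) := fun k => by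
    rw [← mulVec_mulVec, ← mulVec_mulVec, dotProduct_mulVec, vecMul_transpose]
  simp only [dotProduct_sum, sum_mulVec, hcross, hquad, Finset.mul_sum, ← Finset.sum_sub_distrib]
  refine Finset.sum_le_sum fun k hk => ?_
  linarith [(hM k hk).two_mul_dotProduct_le (R k *ᵥ u) (w k)]

theorem dotProduct_inv_mulVec_le_sum [DecidableEq ι] (hM : ∀ k ∈ s, (M k).PosDef) :
    (∑ k ∈ s, (R k)ᵀ *ᵥ w k) ⬝ᵥ
        ((∑ k ∈ s, (R k)ᵀ * (M k)⁻¹ * R k)⁻¹ *ᵥ ∑ k ∈ s, (R k)ᵀ *ᵥ w k) ≤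
      ∑ k ∈ s, w k ⬝ᵥ (M k *ᵥ w k) := by
  set S := ∑ k ∈ s, (R k)ᵀ * (M k)⁻¹ * R k
  set v := ∑ k ∈ s, (R k)ᵀ *ᵥ w k
  by_cases hS : IsUnit S.det
  · have h := two_mul_dotProduct_sub_le_sum s R M w hM (S⁻¹ *ᵥ v)
    rw [mulVec_mulVec, S.mul_nonsing_inv hS, one_mulVec, dotProduct_comm] at h
    linarith
  · -- junk value: a singular `S` has `S⁻¹ = 0`
    rw [nonsing_inv_apply_not_isUnit S hS, zero_mulVec, dotProduct_zero]
    exact Finset.sum_nonneg fun k hk => by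
      simpa using (hM k hk).posSemidef.dotProduct_mulVec_nonneg (w k)

end Matrix

open Matrix

theorem vecMul_restr_apply {n : ℕ} (B : Finset (Fin n)) (x : {i // i ∈ B} → ℝ) (b : {i // i ∈ B}) :
    (x ᵥ* restr B) b = x b := by
  simp [restr, vecMul, dotProduct]

theorem vecMul_restr_injective {n : ℕ} (B : Finset (Fin n)) :
    Function.Injective (restr B).vecMul := fun x y h => funext fun b => by
  simpa only [vecMul_restr_apply] using congrFun h b

theorem posDef_restr_mul_mul_transpose {n : ℕ} {A : Matrix (Fin n) (Fin n) ℝ} (hA : A.PosDef)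
    (B : Finset (Fin n)) : (restr B * A * (restr B)ᵀ).PosDef := by
  simpa only [conjTranspose_eq_transpose_of_trivial] using
    hA.mul_mul_conjTranspose_same (vecMul_restr_injective B)

theorem stmt_16_general {n : ℕ} (A : Matrix (Fin n) (Fin n) ℝ) (hA : A.PosDef)
    (𝓑 : Finset (Finset (Fin n)))
    (v : Fin n → ℝ) (w : (B : Finset (Fin n)) → ({i // i ∈ B} → ℝ))
    (hw : (∑ B ∈ 𝓑, (restr B)ᵀ *ᵥ w B) = v) :
    v ⬝ᵥ ((∑ B ∈ 𝓑, (restr B)ᵀ * (restr B * A * (restr B)ᵀ)⁻¹ * restr B)⁻¹ *ᵥ v) ≤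
      ∑ B ∈ 𝓑, w B ⬝ᵥ ((restr B * A * (restr B)ᵀ) *ᵥ w B) := by
  subst hw
  exact dotProduct_inv_mulVec_le_sum 𝓑 restr (fun B => restr B * A * (restr B)ᵀ) w
    fun B _ => posDef_restr_mul_mul_transpose hA B

/-- The easy direction of the Additive-Schwarz lemma: for any admissible decomposition
`v = Σ_B R_Bᵀ v_B` one has `vᵀ S⁻¹ v ≤ Σ_B v_Bᵀ A_B v_B`. -/
theorem stmt_16 {n : ℕ} (A : Matrix (Fin n) (Fin n) ℝ) (hA : A.PosDef)
    (𝓑 : Finset (Finset (Fin n))) (hcov : ∀ i : Fin n, ∃ B ∈ 𝓑, i ∈ B)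
    (v : Fin n → ℝ) (w : (B : Finset (Fin n)) → ({i // i ∈ B} → ℝ))
    (hw : (∑ B ∈ 𝓑, (restr B)ᵀ *ᵥ w B) = v) :
    v ⬝ᵥ ((∑ B ∈ 𝓑, (restr B)ᵀ * (restr B * A * (restr B)ᵀ)⁻¹ * restr B)⁻¹ *ᵥ v) ≤
      ∑ B ∈ 𝓑, w B ⬝ᵥ ((restr B * A * (restr B)ᵀ) *ᵥ w B) :=
  stmt_16_general A hA 𝓑 v w hw
end
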